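/- arXiv:2402.08878 — 4 statements merged into one kernel-verified Lean document; each statement's English description precedes it below -/
import Mathlib

section
/- Let G = (Q, Σ, δ, q0) be a partial deterministic automaton, Σ_p ⊆ Σ, q_s ∈ Q, and r ∈ ℕ. The following are equivalent: (1) there exists a protection policy P : Q → Set Σ with P(q) ⊆ Σ_p for all q such that every word w with δ*(q0, w) = some q_s satisfies pc(P, q0, w) ≥ r; (2) q_s is r-securely reachable with respect to G and Σ_p (every word reaching q_s contains at least r letters from Σ_p). -/
def run {Q : Type*} {E : Type*} (δ : Q → E → Option Q) : Q → List E → Option Q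
  | q, [] => some q
  | q, σ :: w => (δ q σ).bind fun q' => run δ q' w

open Classical in
noncomputable def pcount {Q : Type*} {E : Type*} (δ : Q → E → Option Q)
    (P : Q → Set E) : Q → List E → ℕ
  | _, [] => 0
  | q, σ :: w =>
      (if σ ∈ P q then 1 else 0) +
        match δ q σ with
        | some q' => pcount δ P q' w
        | none => 0

open Classical in
def secureReach {Q : Type*} {E : Type*} (δ : Q → E → Option Q) (q0 : Q)
    (A : Set E) (r : ℕ) (qs : Q) : Prop :=
  ∀ w : List E, run δ q0 w = some qs → w.countP (fun σ => σ ∈ A) ≥ r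

open Classical in
lemma pcount_le_countP {Q E : Type*} (δ : Q → E → Option Q) (P : Q → Set E)
    (Sp : Set E) (h : ∀ q, P q ⊆ Sp) :
    ∀ (w : List E) (q : Q), pcount δ P q w ≤ w.countP (fun σ => σ ∈ Sp) := by
  intro w
  induction w with
  | nil => intro q; simp [pcount]
  | cons σ w ih =>
    intro q
    rw [pcount, List.countP_cons]
    have h1 : (if σ ∈ P q then 1 else 0) ≤ (if decide (σ ∈ Sp) = true then 1 else 0) := by
      by_cases hσ : σ ∈ P q
      · simp [hσ, h q hσ]
      · simp [hσ]
    have h2 : (match δ q σ with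
        | some q' => pcount δ P q' w
        | none => 0) ≤ w.countP (fun σ => σ ∈ Sp) := by
      cases δ q σ with
      | some q' => exact ih q'
      | none => exact Nat.zero_le _
    omega

open Classical in
lemma pcount_full {Q E : Type*} (δ : Q → E → Option Q) (Sp : Set E) :
    ∀ (w : List E) (q q' : Q), run δ q w = some q' →
      pcount δ (fun _ => Sp) q w = w.countP (fun σ => σ ∈ Sp) := by
  intro w
  induction w with
  | nil => intro q q' _; simp [pcount]
  | cons σ w ih =>
    intro q q' hr
    rw [run] at hr
    cases hδ : δ q σ with
    | none => rw [hδ] at hr; exact absurd hr (by simp)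
    | some q1 =>
      rw [hδ] at hr
      simp only [Option.bind_some] at hr
      rw [pcount, hδ]
      show (if σ ∈ Sp then 1 else 0) + pcount δ (fun _ => Sp) q1 w = _
      rw [ih q1 q' hr, List.countP_cons]
      by_cases hσ : σ ∈ Sp <;> simp [hσ] <;> omega

theorem exists_policy_iff_secureReach {Q E : Type*} (δ : Q → E → Option Q)
    (q0 qs : Q) (Sp : Set E) (r : ℕ) :
    (∃ P : Q → Set E, (∀ q, P q ⊆ Sp) ∧
        ∀ w, run δ q0 w = some qs → pcount δ P q0 w ≥ r) ↔
      secureReach δ q0 Sp r qs := by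
  constructor
  · rintro ⟨P, hP, hpc⟩ w hw
    exact le_trans (hpc w hw) (pcount_le_countP δ P Sp hP w q0)
  · intro hs
    exact ⟨fun _ => Sp, fun _ => le_refl _,
      fun w hw => (pcount_full δ Sp w q0 qs hw).symm ▸ hs w hw⟩
end

section
/- Let G = (Q, Σ, δ, q0) be a partial deterministic automaton, q_s ∈ Q, r ∈ ℕ, and D_1, …, D_r protection policies on G whose protected transition sets Prot(D_j) = {(q, σ) | σ ∈ D_j(q) and δ(q, σ) is defined} are pairwise disjoint. Suppose that for each j ∈ {1, …, r}, every word w with δ*(q0, w) = some q_s satisfies pc(D_j, q0, w) ≥ 1. Then, for the union policy D defined by D(q) = ⋃_{j=1}^r D_j(q), every word w with δ*(q0, w) = some q_s satisfies pc(D, q0, w) ≥ r. -/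
def prot {Q E : Type*} (δ : Q → E → Option Q) (P : Q → Set E) : Set (Q × E) :=
  {p | p.2 ∈ P p.1 ∧ (δ p.1 p.2).isSome}

open Classical in
lemma pcount_cons_of_eq_some {Q E : Type*} {δ : Q → E → Option Q} (P : Q → Set E)
    {q q' : Q} {σ : E} (hσ : δ q σ = some q') (w : List E) :
    pcount δ P q (σ :: w) = (if σ ∈ P q then 1 else 0) + pcount δ P q' w := by
  simp [pcount, hσ]

section DisjointPolicies

variable {Q E ι : Type*} {δ : Q → E → Option Q} {D : ι → Q → Set E}

lemma subsingleton_setOf_mem_of_pairwise_disjoint_prot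
    (hdisj : Pairwise fun j j' => Disjoint (prot δ (D j)) (prot δ (D j')))
    {q : Q} {σ : E} (hσ : (δ q σ).isSome) : {j | σ ∈ D j q}.Subsingleton := by
  intro j hj j' hj'
  by_contra hne
  exact Set.disjoint_left.mp (hdisj hne) (⟨hj, hσ⟩ : (q, σ) ∈ prot δ (D j)) ⟨hj', hσ⟩

open Classical in
lemma sum_ite_mem_le_ite_mem_iUnion [Fintype ι]
    (hdisj : Pairwise fun j j' => Disjoint (prot δ (D j)) (prot δ (D j')))
    {q : Q} {σ : E} (hσ : (δ q σ).isSome) :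
    ∑ j, (if σ ∈ D j q then 1 else 0) ≤ if σ ∈ ⋃ j, D j q then 1 else 0 := by
  rw [Finset.sum_boole, Nat.cast_id]
  split_ifs with hunion
  · refine Finset.card_le_one.mpr fun j hj j' hj' => ?_
    simp only [Finset.mem_filter, Finset.mem_univ, true_and] at hj hj'
    exact subsingleton_setOf_mem_of_pairwise_disjoint_prot hdisj hσ hj hj'
  · simp_all

/-- The run must stay defined: `pcount` also counts a letter at which the run gets stuck, and at such
an undefined transition the policies may overlap. -/
lemma sum_pcount_le_pcount_iUnion [Fintype ι]
    (hdisj : Pairwise fun j j' => Disjoint (prot δ (D j)) (prot δ (D j')))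
    {q : Q} {w : List E} (hw : run δ q w ≠ none) :
    ∑ j, pcount δ (D j) q w ≤ pcount δ (fun q => ⋃ j, D j q) q w := by
  induction w generalizing q with
  | nil => simp [pcount]
  | cons σ w ih =>
    cases hσ : δ q σ with
    | none => simp [run, hσ] at hw
    | some q' =>
      have hw' : run δ q' w ≠ none := by simpa [run, hσ] using hw
      simp only [pcount_cons_of_eq_some _ hσ, Finset.sum_add_distrib]
      exact Nat.add_le_add (sum_ite_mem_le_ite_mem_iUnion hdisj (by simp [hσ])) (ih hw')

end DisjointPolicies

theorem union_of_disjoint_policies {Q E : Type*} (δ : Q → E → Option Q) (q0 qs : Q)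
    (r : ℕ) (D : Fin r → Q → Set E)
    (hdisj : Pairwise fun j j' => Disjoint (prot δ (D j)) (prot δ (D j')))
    (h : ∀ j, ∀ w, run δ q0 w = some qs → pcount δ (D j) q0 w ≥ 1) :
    ∀ w, run δ q0 w = some qs → pcount δ (fun q => ⋃ j, D j q) q0 w ≥ r := by
  intro w hw
  calc r = ∑ _j : Fin r, 1 := by simp
    _ ≤ ∑ j, pcount δ (D j) q0 w := Finset.sum_le_sum fun j _ => h j w hw
    _ ≤ _ := sum_pcount_le_pcount_iUnion hdisj (by simp [hw])
end

section
/- Let G = (Q, Σ, δ, q0) be a partial deterministic automaton and q_s ∈ Q with q_s ≠ q0. Define the specification transition function δ_K : Q → Σ → Option Q by δ_K(q, σ) = none if q = q_s or δ(q, σ) = some q_s, and δ_K(q, σ) = δ(q, σ) otherwise. Then for every word w ∈ List Σ and every state q: δ_K*(q0, w) = some q if and only if δ*(q0, w) = some q and for every prefix u of w, δ*(q0, u) ≠ some q_s. In particular, the words with a defined run in the specification automaton G_K = (Q, Σ, δ_K, q0) are exactly the words whose run in G is defined and never visits q_s. -/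
open Classical in
theorem spec_aux {Q E : Type*} (δ : Q → E → Option Q) (qs : Q) :
    ∀ (w : List E) (p q : Q), p ≠ qs →
      (run (fun q' σ => if q' = qs ∨ δ q' σ = some qs then none else δ q' σ) p w = some q ↔
        (run δ p w = some q ∧ ∀ u, u <+: w → run δ p u ≠ some qs)) := by
  intro w
  induction w with
  | nil =>
    intro p q hp
    constructor
    · intro h
      refine ⟨h, ?_⟩
      intro u hu
      simp at hu
      subst hu
      exact fun h' => hp (Option.some.inj h')
    · exact fun h => h.1
  | cons σ w ih =>
    intro p q hp
    simp only [run]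
    by_cases h1 : p = qs ∨ δ p σ = some qs
    · simp [h1]
      intro hrun
      rcases h1 with h1 | h1
      · exact absurd h1 hp
      · exact ⟨[σ], by simp, by simp [run, h1]⟩
    · push_neg at h1
      simp only [if_neg (not_or.mpr h1)]
      cases hδ : δ p σ with
      | none =>
        simp [hδ, run]
      | some p' =>
        have hp' : p' ≠ qs := by
          intro h; rw [h] at hδ; exact h1.2 hδ
        simp only [Option.bind_some]
        rw [ih p' q hp']
        constructor
        · rintro ⟨hr, hpref⟩
          refine ⟨by simp [run, hδ, hr], ?_⟩
          intro u hu
          rcases u with _ | ⟨τ, u⟩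
          · exact fun h => hp (Option.some.inj h)
          · obtain ⟨hτ, hu'⟩ : τ = σ ∧ u <+: w := by
              rcases hu with ⟨t, ht⟩
              injection ht with h1' h2'
              exact ⟨h1', ⟨t, h2'⟩⟩
            subst hτ
            simp [run, hδ]
            exact hpref u hu'
        · rintro ⟨hr, hpref⟩
          refine ⟨hr, ?_⟩
          intro u hu
          have := hpref (σ :: u) (by simpa using hu)
          simpa [run, hδ] using this

open Classical in
theorem spec_correct {Q E : Type*} (δ : Q → E → Option Q) (q0 qs : Q) (hne : qs ≠ q0) :
    ∀ (w : List E) (q : Q),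
      run (fun q' σ => if q' = qs ∨ δ q' σ = some qs then none else δ q' σ) q0 w = some q ↔
        (run δ q0 w = some q ∧ ∀ u, u <+: w → run δ q0 u ≠ some qs) := by
  intro w q
  exact spec_aux δ qs w q0 q (Ne.symm hne)
end

section
/- Let G = (Q, Σ, δ, q0) be a partial deterministic automaton and D : Q → Set Σ a protection policy. Define the relabelled automaton G' = (Q, Σ ⊕ Σ, δ', q0) by δ'(q, Sum.inl σ) = δ(q, σ) if σ ∉ D(q) (and none otherwise), and δ'(q, Sum.inr σ) = δ(q, σ) if σ ∈ D(q) (and none otherwise). Let π : List (Σ ⊕ Σ) → List Σ be the letterwise projection Sum.elim id id. Then: (a) for every word w' over Σ ⊕ Σ and state q, if δ'*(q0, w') = some q then δ*(q0, π(w')) = some q, and the number of Sum.inr letters in w' equals pc(D, q0, π(w')); (b) conversely, for every word w over Σ with δ*(q0, w) = some q there exists a unique word w' over Σ ⊕ Σ with π(w') = w and δ'*(q0, w') = some q. Hence π is a bijection, preserving terminal states, between words with defined runs in G' and words with defined runs in G. -/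
open Classical in
noncomputable def relabel {Q E : Type*} (δ : Q → E → Option Q) (D : Q → Set E) :
    Q → (E ⊕ E) → Option Q
  | q, Sum.inl σ => if σ ∈ D q then none else δ q σ
  | q, Sum.inr σ => if σ ∈ D q then δ q σ else none

open Classical in
lemma relabel_fwd {Q E : Type*} (δ : Q → E → Option Q) (D : Q → Set E) :
    ∀ (w' : List (E ⊕ E)) (q0 q : Q), run (relabel δ D) q0 w' = some q →
        run δ q0 (w'.map (Sum.elim id id)) = some q ∧
          w'.countP (fun x => x.isRight) = pcount δ D q0 (w'.map (Sum.elim id id)) := by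
  intro w'
  induction w' with
  | nil => intro q0 q h; simpa [run, pcount] using h
  | cons a t ih =>
    intro q0 q h
    cases a with
    | inl σ =>
      simp only [run, relabel] at h
      by_cases hD : σ ∈ D q0
      · simp [hD] at h
      · simp only [hD, if_neg, if_false] at h
        cases hδ : δ q0 σ with
        | none => simp [hδ] at h
        | some q1 =>
          rw [hδ] at h
          simp only [Option.bind_some] at h
          obtain ⟨h1, h2⟩ := ih q1 q h
          constructor
          · simp [run, hδ, h1]
          · simp [List.countP_cons, pcount, hδ, hD, h2]
    | inr σ =>
      simp only [run, relabel] at h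
      by_cases hD : σ ∈ D q0
      · simp only [hD, if_true] at h
        cases hδ : δ q0 σ with
        | none => simp [hδ] at h
        | some q1 =>
          rw [hδ] at h
          simp only [Option.bind_some] at h
          obtain ⟨h1, h2⟩ := ih q1 q h
          constructor
          · simp [run, hδ, h1]
          · simp [List.countP_cons, pcount, hδ, hD, h2, Nat.add_comm]
      · simp [hD] at h

open Classical in
lemma relabel_bwd {Q E : Type*} (δ : Q → E → Option Q) (D : Q → Set E) :
    ∀ (w : List E) (q0 q : Q), run δ q0 w = some q →
        ∃! w' : List (E ⊕ E),
          w'.map (Sum.elim id id) = w ∧ run (relabel δ D) q0 w' = some q := by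
  intro w
  induction w with
  | nil =>
    intro q0 q h
    simp only [run] at h
    refine ⟨[], ⟨by simp, by simpa [run] using h⟩, ?_⟩
    rintro w' ⟨hmap, -⟩
    simpa using hmap
  | cons σ t ih =>
    intro q0 q h
    simp only [run] at h
    cases hδ : δ q0 σ with
    | none => simp [hδ] at h
    | some q1 =>
      rw [hδ] at h
      simp only [Option.bind_some] at h
      obtain ⟨w'', ⟨hmap, hrun⟩, huniq⟩ := ih q1 q h
      by_cases hD : σ ∈ D q0
      · refine ⟨Sum.inr σ :: w'', ⟨by simp [hmap], by simp [run, relabel, hD, hδ, hrun]⟩, ?_⟩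
        rintro v ⟨hvmap, hvrun⟩
        cases v with
        | nil => simp at hvmap
        | cons a vt =>
          cases a with
          | inl τ =>
            simp only [List.map_cons, Sum.elim_inl, id] at hvmap
            obtain ⟨rfl, htv⟩ := List.cons.injEq _ _ _ _ ▸ hvmap
            simp [run, relabel, hD] at hvrun
          | inr τ =>
            simp only [List.map_cons, Sum.elim_inr, id] at hvmap
            obtain ⟨rfl, htv⟩ := List.cons.injEq _ _ _ _ ▸ hvmap
            simp only [run, relabel, hD, if_true, hδ, Option.bind_some] at hvrun
            rw [huniq vt ⟨htv, hvrun⟩]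
      · refine ⟨Sum.inl σ :: w'', ⟨by simp [hmap], by simp [run, relabel, hD, hδ, hrun]⟩, ?_⟩
        rintro v ⟨hvmap, hvrun⟩
        cases v with
        | nil => simp at hvmap
        | cons a vt =>
          cases a with
          | inr τ =>
            simp only [List.map_cons, Sum.elim_inr, id] at hvmap
            obtain ⟨rfl, htv⟩ := List.cons.injEq _ _ _ _ ▸ hvmap
            simp [run, relabel, hD] at hvrun
          | inl τ =>
            simp only [List.map_cons, Sum.elim_inl, id] at hvmap
            obtain ⟨rfl, htv⟩ := List.cons.injEq _ _ _ _ ▸ hvmap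
            simp only [run, relabel, hD, if_false, hδ, Option.bind_some] at hvrun
            rw [huniq vt ⟨htv, hvrun⟩]

theorem relabel_correct {Q E : Type*} (δ : Q → E → Option Q) (q0 : Q) (D : Q → Set E) :
    (∀ (w' : List (E ⊕ E)) (q : Q), run (relabel δ D) q0 w' = some q →
        run δ q0 (w'.map (Sum.elim id id)) = some q ∧
          w'.countP (fun x => x.isRight) = pcount δ D q0 (w'.map (Sum.elim id id))) ∧
    (∀ (w : List E) (q : Q), run δ q0 w = some q →
        ∃! w' : List (E ⊕ E),
          w'.map (Sum.elim id id) = w ∧ run (relabel δ D) q0 w' = some q) := by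
  exact ⟨fun w' q => relabel_fwd δ D w' q0 q, fun w q => relabel_bwd δ D w q0 q⟩
end
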